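/- arXiv:2305.04803 — 2 statements merged into one kernel-verified Lean document; each statement's English description precedes it below -/
import Mathlib

section
/- Let Λ and H be countable discrete groups with H infinite, and let p : Λ ≀ H → Λ^{Ab} ≀ H be the canonical quotient homomorphism induced by the abelianization Λ → Λ^{Ab} = Λ/[Λ,Λ]. If (K, β) is a Bohr compactification of Λ^{Ab} ≀ H, then (K, β ∘ p) is a Bohr compactification of Λ ≀ H; likewise, if (K, α) is a profinite completion of Λ^{Ab} ≀ H, then (K, α ∘ p) is a profinite completion of Λ ≀ H. -/
universe u v w

/-- Conjugation by `g` as a homomorphism of a normal subgroup `N`: `n ↦ g⁻¹ n g`. -/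
def conjHom {G : Type u} [Group G] {N : Subgroup G} (hN : N.Normal) (g : G) : N →* N where
  toFun n := ⟨g⁻¹ * (n : G) * g, by simpa using hN.conj_mem (n : G) n.2 g⁻¹⟩
  map_one' := by ext; simp
  map_mul' a b := by ext; simp [mul_assoc]

/-- The conjugate representation `σ^g`, `σ^g(n) = σ(g⁻¹ n g)`. -/
def conjRep {G : Type u} [Group G] {N : Subgroup G} (hN : N.Normal) {m : ℕ}
    (σ : N →* Matrix.unitaryGroup (Fin m) ℂ) (g : G) : N →* Matrix.unitaryGroup (Fin m) ℂ :=
  σ.comp (conjHom hN g)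

/-- Unitary equivalence of two finite-dimensional unitary representations. -/
def UnitarilyEquiv {G : Type u} [Group G] {m : ℕ}
    (σ τ : G →* Matrix.unitaryGroup (Fin m) ℂ) : Prop :=
  ∃ V : Matrix.unitaryGroup (Fin m) ℂ, ∀ g : G, τ g = V * σ g * V⁻¹

/-- Irreducibility of a finite-dimensional unitary representation. -/
def IsIrreducibleRep {G : Type u} [Group G] {m : ℕ}
    (σ : G →* Matrix.unitaryGroup (Fin m) ℂ) : Prop :=
  ∀ W : Submodule ℂ (Fin m → ℂ),
    (∀ g : G, ∀ v ∈ W, (σ g : Matrix (Fin m) (Fin m) ℂ).mulVec v ∈ W) → W = ⊥ ∨ W = ⊤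

/-- A representation of `N` has finite `H`-orbit if the conjugates `σ^h`, `h ∈ H`, fall into
finitely many unitary equivalence classes. -/
def HasFiniteHOrbit {G : Type u} [Group G] {N : Subgroup G} (hN : N.Normal) (H : Subgroup G)
    {m : ℕ} (σ : N →* Matrix.unitaryGroup (Fin m) ℂ) : Prop :=
  ∃ S : Finset (N →* Matrix.unitaryGroup (Fin m) ℂ),
    ∀ h ∈ H, ∃ τ ∈ S, UnitarilyEquiv (conjRep hN σ h) τ

/-- `(K, β)` is a Bohr compactification of `G`. -/
def IsBohrCompactification (G : Type u) [Group G] [TopologicalSpace G]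
    (K : Type v) [Group K] [TopologicalSpace K] [IsTopologicalGroup K] [CompactSpace K]
    [T2Space K] (β : G →* K) : Prop :=
  Continuous β ∧ DenseRange β ∧
    ∀ (L : Type w) [Group L] [TopologicalSpace L] [IsTopologicalGroup L] [CompactSpace L]
      [T2Space L] (α : G →* L), Continuous α →
        ∃ α' : K →* L, Continuous α' ∧ α = α'.comp β

/-- `(K, α)` is a profinite completion of `G`. -/
def IsProfiniteCompletion (G : Type u) [Group G] [TopologicalSpace G]
    (K : Type v) [Group K] [TopologicalSpace K] [IsTopologicalGroup K] [CompactSpace K]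
    [T2Space K] [TotallyDisconnectedSpace K] (α : G →* K) : Prop :=
  Continuous α ∧ DenseRange α ∧
    ∀ (L : Type w) [Group L] [TopologicalSpace L] [IsTopologicalGroup L] [CompactSpace L]
      [T2Space L] [TotallyDisconnectedSpace L] (γ : G →* L), Continuous γ →
        ∃ γ' : K →* L, Continuous γ' ∧ γ = γ'.comp α
/-- The restricted direct product `⊕_{h ∈ H} Λ`: finitely supported functions `H → Λ`. -/
def restrictedProduct (H : Type u) (Λ : Type v) [Group Λ] : Subgroup (H → Λ) where
  carrier := {f | (Function.mulSupport f).Finite}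
  one_mem' := by simp
  mul_mem' := by
    intro f g hf hg
    exact Set.Finite.subset (hf.union hg) (Function.mulSupport_mul f g)
  inv_mem' := by
    intro f hf
    simpa using hf

/-- The shift of a finitely supported function: `(h · f)(h') = f (h⁻¹ h')`. -/
def shiftEquiv (Λ : Type v) (H : Type u) [Group Λ] [Group H] (h : H) :
    restrictedProduct H Λ ≃* restrictedProduct H Λ where
  toFun f := ⟨fun h' => (f : H → Λ) (h⁻¹ * h'), by
    refine Set.Finite.subset (f.2.image (h * ·)) ?_
    intro h' hh'
    exact ⟨h⁻¹ * h', hh', by group⟩⟩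
  invFun f := ⟨fun h' => (f : H → Λ) (h * h'), by
    refine Set.Finite.subset (f.2.image (h⁻¹ * ·)) ?_
    intro h' hh'
    exact ⟨h * h', hh', by group⟩⟩
  left_inv f := by ext h'; simp
  right_inv f := by ext h'; simp
  map_mul' f g := by ext h'; simp [Subgroup.coe_mul]

/-- The shift action of `H` on `⊕_{h ∈ H} Λ`. -/
def shiftAut (Λ : Type v) (H : Type u) [Group Λ] [Group H] :
    H →* MulAut (restrictedProduct H Λ) where
  toFun h := shiftEquiv Λ H h
  map_one' := by
    ext f h'
    simp [shiftEquiv]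
  map_mul' h₁ h₂ := by
    ext f h'
    simp [shiftEquiv, mul_assoc]

/-- The wreath product `Λ ≀ H`. -/
def Wreath (Λ : Type v) (H : Type u) [Group Λ] [Group H] : Type (max u v) :=
  restrictedProduct H Λ ⋊[shiftAut Λ H] H

instance (Λ : Type v) (H : Type u) [Group Λ] [Group H] : Group (Wreath Λ H) :=
  inferInstanceAs (Group (restrictedProduct H Λ ⋊[shiftAut Λ H] H))
/-- The homomorphism `⊕_H Λ₁ →* ⊕_H Λ₂` induced by a homomorphism `Λ₁ →* Λ₂`. -/
def restrictedMap (H : Type u) {Λ₁ : Type v} {Λ₂ : Type w} [Group Λ₁] [Group Λ₂]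
    (f : Λ₁ →* Λ₂) : restrictedProduct H Λ₁ →* restrictedProduct H Λ₂ where
  toFun g := ⟨fun h => f ((g : H → Λ₁) h),
    Set.Finite.subset g.2 (Function.mulSupport_comp_subset (map_one f) _)⟩
  map_one' := by ext h; simp
  map_mul' a b := by ext h; simp

/-- The homomorphism `Λ₁ ≀ H →* Λ₂ ≀ H` induced by a homomorphism `Λ₁ →* Λ₂`. -/
def wreathMap (H : Type u) {Λ₁ : Type v} {Λ₂ : Type w} [Group Λ₁] [Group Λ₂] [Group H]
    (f : Λ₁ →* Λ₂) : Wreath Λ₁ H →* Wreath Λ₂ H :=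
  SemidirectProduct.map (restrictedMap H f) (MonoidHom.id H)
    (fun _ => DFunLike.ext _ _ fun _ => Subtype.ext (funext fun _ => rfl))

instance (Λ : Type v) (H : Type u) [Group Λ] [Group H] : TopologicalSpace (Wreath Λ H) := ⊥

instance (Λ : Type v) (H : Type u) [Group Λ] [Group H] : DiscreteTopology (Wreath Λ H) :=
  ⟨rfl⟩

instance (Λ : Type v) (H : Type u) [Group Λ] [Group H] : IsTopologicalGroup (Wreath Λ H) where
  continuous_mul := continuous_of_discreteTopology
  continuous_inv := continuous_of_discreteTopology

/-!
If `g : H →* L` with `H` infinite and `L` compact, then `1` lies in the closure of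
`g '' {1}ᶜ`: near a cluster point of `g` along the cofinite filter lie `g h₁` and `g h₂` with
`h₁ ≠ h₂`, so `g (h₁ h₂⁻¹)` is close to `1`. Conjugation by `h ∈ H` moves the
coordinate copy `Λ_k` of the base group to `Λ_{hk}`, which commutes with `Λ_k` for `h ≠ 1`; since
commuting is a closed condition in a Hausdorff group, letting `h` tend to the identity shows that
any homomorphism from `Λ ≀ H` to a compact Hausdorff group makes `Λ_k` abelian, so it factors
through `Λ^{Ab} ≀ H`. For countable groups the universal properties do not depend on the universe
of the test groups: the closure of the image is separable and regular, hence of cardinality at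
most `2^𝔠`, so it can be shrunk into any universe.
-/

open Function Set Filter Topology

universe w₁ w₂

namespace Shrink

variable (X : Type*) [Small.{w} X] [TopologicalSpace X]

noncomputable def continuousMulEquiv [Mul X] : Shrink.{w} X ≃ₜ* X :=
  { Shrink.mulEquiv, (Shrink.homeomorph X).symm with }

instance [Group X] [IsTopologicalGroup X] : IsTopologicalGroup (Shrink.{w} X) :=
  (continuousMulEquiv X).isTopologicalGroup

instance [CompactSpace X] : CompactSpace (Shrink.{w} X) :=
  (Shrink.homeomorph X).compactSpace

instance [T2Space X] : T2Space (Shrink.{w} X) :=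
  (Shrink.homeomorph X).symm.isEmbedding.t2Space

instance [TotallyDisconnectedSpace X] : TotallyDisconnectedSpace (Shrink.{w} X) :=
  (Shrink.homeomorph X).symm.isEmbedding.isTotallyDisconnected_range.1
    (isTotallyDisconnected_of_totallyDisconnectedSpace _)

end Shrink

theorem small_of_denseRange {ι X : Type*} [Small.{w} ι] [TopologicalSpace X] [T3Space X]
    {f : ι → X} (hf : DenseRange f) : Small.{w} X := by
  refine small_of_injective (f := fun x : X => {S : Set ι | x ∈ closure (f '' S)}) ?_
  intro x y hxy
  by_contra hne
  obtain ⟨t, htx, htc, hyt⟩ := exists_mem_nhds_isClosed_subset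
    ((isOpen_compl_singleton (x := y)).mem_nhds hne)
  have hx : x ∈ closure (f '' (f ⁻¹' interior t)) := by
    rw [image_preimage_eq_inter_range]
    exact hf.open_subset_closure_inter isOpen_interior (mem_interior_iff_mem_nhds.2 htx)
  have hy : y ∈ closure (f '' (f ⁻¹' interior t)) := (Set.ext_iff.1 hxy _).1 hx
  exact hyt (htc.closure_subset_iff.2 ((image_preimage_subset _ _).trans interior_subset) hy) rfl

theorem MonoidHom.denseRange_codRestrict_topologicalClosure_range {G L : Type*} [Group G]
    [Group L] [TopologicalSpace L] [IsTopologicalGroup L] (α : G →* L) :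
    DenseRange (α.codRestrict α.range.topologicalClosure
      fun g => α.range.le_topologicalClosure ⟨g, rfl⟩) := by
  rw [DenseRange, Subtype.dense_iff, ← Set.range_comp]
  exact subset_rfl

instance MonoidHom.small_topologicalClosure_range {G L : Type*} [Group G] [Countable G]
    [Group L] [TopologicalSpace L] [IsTopologicalGroup L] [T3Space L] (α : G →* L) :
    Small.{w} α.range.topologicalClosure :=
  small_of_denseRange α.denseRange_codRestrict_topologicalClosure_range

instance Subgroup.compactSpace_topologicalClosure {L : Type*} [Group L] [TopologicalSpace L]
    [IsTopologicalGroup L] [CompactSpace L] (S : Subgroup L) : CompactSpace S.topologicalClosure :=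
  isCompact_iff_compactSpace.1 S.isClosed_topologicalClosure.isCompact

namespace MonoidHom

variable {G L : Type*} [Group G] [Countable G] [Group L] [TopologicalSpace L]
  [IsTopologicalGroup L] [T3Space L]

noncomputable def toShrinkRangeClosure (α : G →* L) :
    G →* Shrink.{w} α.range.topologicalClosure :=
  (Shrink.continuousMulEquiv _).symm.toMonoidHom.comp
    (α.codRestrict _ fun g => α.range.le_topologicalClosure ⟨g, rfl⟩)

theorem continuous_toShrinkRangeClosure [TopologicalSpace G] {α : G →* L} (hα : Continuous α) :
    Continuous (α.toShrinkRangeClosure.{w}) :=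
  (Shrink.continuousMulEquiv _).symm.continuous.comp (hα.subtype_mk _)

theorem exists_continuous_eq_comp_of_toShrinkRangeClosure {K : Type*} [Group K]
    [TopologicalSpace K] {α : G →* L} {β : G →* K}
    (h : ∃ γ : K →* Shrink.{w} α.range.topologicalClosure,
      Continuous γ ∧ α.toShrinkRangeClosure = γ.comp β) :
    ∃ γ : K →* L, Continuous γ ∧ α = γ.comp β := by
  obtain ⟨γ, hγ, hfac⟩ := h
  let e := Shrink.continuousMulEquiv.{w} α.range.topologicalClosure
  refine ⟨α.range.topologicalClosure.subtype.comp (e.toMonoidHom.comp γ),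
    continuous_subtype_val.comp (e.continuous.comp hγ), ?_⟩
  ext g
  change α g = (e (γ (β g)) : L)
  have hg : e.symm ⟨α g, _⟩ = γ (β g) := DFunLike.congr_fun hfac g
  rw [← hg, e.apply_symm_apply]

end MonoidHom

theorem MonoidHom.one_mem_closure_image_compl_one {H L : Type*} [Group H] [Infinite H] [Group L]
    [TopologicalSpace L] [IsTopologicalGroup L] [CompactSpace L] (g : H →* L) :
    (1 : L) ∈ closure (g '' {1}ᶜ) := by
  refine mem_closure_iff_nhds.2 fun U hU => ?_
  obtain ⟨V, hV, hVU⟩ := exists_nhds_split_inv hU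
  obtain ⟨x, hx⟩ := exists_clusterPt_of_compactSpace (map g cofinite)
  have hVx : (· * x⁻¹) ⁻¹' V ∈ 𝓝 x :=
    (continuous_mul_const x⁻¹).continuousAt.preimage_mem_nhds (by rwa [mul_inv_cancel])
  obtain ⟨h₁, hh₁, h₂, hh₂, hne⟩ :=
    (frequently_cofinite_iff_infinite.1 (hx.frequently hVx)).nontrivial
  refine ⟨g (h₁ * h₂⁻¹), ?_, h₁ * h₂⁻¹, mul_inv_eq_one.not.2 hne, rfl⟩
  simpa [div_eq_mul_inv, mul_assoc] using hVU _ hh₁ _ hh₂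

theorem commute_of_one_mem_closure_of_forall_conj {L : Type*} [Group L] [TopologicalSpace L]
    [IsTopologicalGroup L] [T2Space L] {S : Set L} (hS : (1 : L) ∈ closure S) {x y : L}
    (hxy : ∀ u ∈ S, Commute (u * x * u⁻¹) y) : Commute x y := by
  have hclosed : IsClosed {u : L | u * x * u⁻¹ * y = y * (u * x * u⁻¹)} :=
    isClosed_eq (by fun_prop) (by fun_prop)
  show x * y = y * x
  simpa using hclosed.closure_subset_iff.2 hxy hS

namespace restrictedProduct

variable {H : Type*} {Λ : Type*} [Group Λ] [DecidableEq H]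

def mulSingle (k : H) : Λ →* restrictedProduct H Λ :=
  (MonoidHom.mulSingle (fun _ : H => Λ) k).codRestrict _
    fun _ => (finite_singleton k).subset Pi.mulSupport_mulSingle_subset

@[simp]
theorem coe_mulSingle (k : H) (a : Λ) :
    ((mulSingle k a : restrictedProduct H Λ) : H → Λ) = Pi.mulSingle k a :=
  rfl

@[elab_as_elim]
theorem induction_on {P : restrictedProduct H Λ → Prop} (n : restrictedProduct H Λ)
    (one : P 1)
    (mulSingle_mul : ∀ (k : H) (a : Λ) (n : restrictedProduct H Λ), (n : H → Λ) k = 1 → P n →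
      P (mulSingle k a * n)) : P n := by
  obtain ⟨s, hs⟩ : ∃ s : Finset H, mulSupport (n : H → Λ) ⊆ s :=
    ⟨n.2.toFinset, n.2.coe_toFinset.superset⟩
  induction s using Finset.induction_on generalizing n with
  | empty =>
    convert one
    ext k
    by_contra hk
    simpa using hs hk
  | insert k s _ ih =>
    rw [← mul_inv_cancel_left (mulSingle k ((n : H → Λ) k)) n]
    refine mulSingle_mul _ _ _ (by simp) (ih _ fun j hj => ?_)
    have hjk : j ≠ k := by rintro rfl; simp at hj
    exact (Finset.mem_insert.1 (hs (by simpa [hjk] using hj))).resolve_left hjk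

theorem shiftAut_mulSingle [Group H] (h k : H) (a : Λ) :
    shiftAut Λ H h (mulSingle k a) = mulSingle (h * k) a := by
  ext j
  simp [shiftAut, shiftEquiv, Pi.mulSingle_apply, inv_mul_eq_iff_eq_mul]

theorem restrictedMap_mulSingle {Λ' : Type*} [Group Λ'] (f : Λ →* Λ') (k : H) (a : Λ) :
    restrictedMap H f (mulSingle k a) = mulSingle k (f a) := by
  ext j
  simp [restrictedMap, Pi.mulSingle_apply, apply_ite f]

theorem ker_restrictedMap_le {Λ' M : Type*} [Group Λ'] [Group M] (f : Λ →* Λ')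
    (φ : restrictedProduct H Λ →* M) (hφ : ∀ k, f.ker ≤ (φ.comp (mulSingle k)).ker) :
    (restrictedMap H f).ker ≤ φ.ker := by
  intro n
  induction n using restrictedProduct.induction_on with
  | one => simp
  | mulSingle_mul k a n hnk ih =>
    intro hn
    have ha : f a = 1 := by
      simpa [restrictedMap, hnk] using congrFun (congrArg Subtype.val hn) k
    rw [MonoidHom.mem_ker, map_mul, restrictedMap_mulSingle, ha, map_one, one_mul] at hn
    rw [MonoidHom.mem_ker, map_mul, ih hn, mul_one]
    exact hφ k ha

end restrictedProduct

instance {H Λ : Type*} [Group Λ] [Countable H] [Countable Λ] :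
    Countable (restrictedProduct H Λ) := by
  classical
  refine Surjective.countable (f := fun l : List (H × Λ) =>
    (l.map fun x => restrictedProduct.mulSingle x.1 x.2).prod) fun n => ?_
  induction n using restrictedProduct.induction_on with
  | one => exact ⟨[], rfl⟩
  | mulSingle_mul k a n _ hn =>
    obtain ⟨l, rfl⟩ := hn
    exact ⟨(k, a) :: l, rfl⟩

theorem restrictedMap_surjective {H Λ Λ' : Type*} [Group Λ] [Group Λ'] {f : Λ →* Λ'}
    (hf : Surjective f) : Surjective (restrictedMap H f) := by
  classical
  intro n
  induction n using restrictedProduct.induction_on with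
  | one => exact ⟨1, map_one _⟩
  | mulSingle_mul k a n _ hn =>
    obtain ⟨m, rfl⟩ := hn
    obtain ⟨b, rfl⟩ := hf a
    exact ⟨restrictedProduct.mulSingle k b * m,
      by rw [map_mul, restrictedProduct.restrictedMap_mulSingle]⟩

instance {G : Type*} [Group G] [Countable G] : Countable (Abelianization G) :=
  (QuotientGroup.mk'_surjective _).countable

namespace Wreath

variable {Λ H : Type*} [Group Λ] [Group H]

def inl : restrictedProduct H Λ →* Wreath Λ H := SemidirectProduct.inl

def inr : H →* Wreath Λ H := SemidirectProduct.inr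

theorem inr_mul_inl_mul_inr_inv (h : H) (n : restrictedProduct H Λ) :
    inr h * inl n * (inr h)⁻¹ = (inl (shiftAut Λ H h n) : Wreath Λ H) := by
  rw [← map_inv]
  exact (SemidirectProduct.inl_aut h n).symm

instance [Countable Λ] [Countable H] : Countable (Wreath Λ H) :=
  (SemidirectProduct.equivProd (φ := shiftAut Λ H)).injective.countable

theorem commute_map_inl_mulSingle [DecidableEq H] [Infinite H] {L : Type*} [Group L]
    [TopologicalSpace L] [IsTopologicalGroup L] [CompactSpace L] [T2Space L]
    (α : Wreath Λ H →* L) (k : H) (a b : Λ) :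
    Commute (α (inl (restrictedProduct.mulSingle k a)))
      (α (inl (restrictedProduct.mulSingle k b))) := by
  refine commute_of_one_mem_closure_of_forall_conj
    ((α.comp inr).one_mem_closure_image_compl_one) ?_
  rintro _ ⟨h, hh, rfl⟩
  have hhk : h * k ≠ k := fun hk => hh (mul_eq_right.1 hk)
  rw [MonoidHom.comp_apply, ← map_inv, ← map_mul, ← map_mul, inr_mul_inl_mul_inr_inv,
    restrictedProduct.shiftAut_mulSingle]
  refine Commute.map ?_ (α.comp inl)
  exact Subtype.ext (Pi.mulSingle_commute (f := fun _ : H => Λ) hhk a b).eq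

end Wreath

section WreathMap

variable {Λ H : Type*} [Group Λ] [Group H]

theorem wreathMap_surjective {Λ' : Type*} [Group Λ'] {f : Λ →* Λ'} (hf : Surjective f) :
    Surjective (wreathMap H f) := by
  rintro ⟨n, h⟩
  obtain ⟨m, rfl⟩ := restrictedMap_surjective hf n
  exact ⟨⟨m, h⟩, rfl⟩

theorem ker_wreathMap_le {Λ' M : Type*} [Group Λ'] [Group M] (f : Λ →* Λ')
    (α : Wreath Λ H →* M) (hα : (restrictedMap H f).ker ≤ (α.comp Wreath.inl).ker) :
    (wreathMap H f).ker ≤ α.ker := by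
  rintro ⟨n, h⟩ hg
  obtain rfl : h = 1 := congrArg SemidirectProduct.right hg
  exact hα (congrArg SemidirectProduct.left hg)

theorem ker_wreathMap_abelianization_le [Infinite H] {L : Type*} [Group L]
    [TopologicalSpace L] [IsTopologicalGroup L] [CompactSpace L] [T2Space L]
    (α : Wreath Λ H →* L) : (wreathMap H (Abelianization.of (G := Λ))).ker ≤ α.ker := by
  classical
  refine ker_wreathMap_le _ α (restrictedProduct.ker_restrictedMap_le _ _ fun k => ?_)
  rw [Abelianization.ker_of, commutator_def, Subgroup.commutator_le]
  intro a _ b _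
  simpa [commutatorElement_eq_one_iff_commute] using Wreath.commute_map_inl_mulSingle α k a b

end WreathMap

namespace IsBohrCompactification

variable {G : Type u} [Group G] [TopologicalSpace G] {K : Type v} [Group K] [TopologicalSpace K]
  [IsTopologicalGroup K] [CompactSpace K] [T2Space K]

theorem lift_universe [Countable G] {β : G →* K} (h : IsBohrCompactification.{u, v, w₁} G K β) :
    IsBohrCompactification.{u, v, w₂} G K β :=
  ⟨h.1, h.2.1, fun _ _ _ _ _ _ α hα => α.exists_continuous_eq_comp_of_toShrinkRangeClosure
    (h.2.2 _ _ (MonoidHom.continuous_toShrinkRangeClosure hα))⟩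

theorem comp_of_isQuotientMap {G' : Type u} [Group G'] [TopologicalSpace G'] {β : G' →* K}
    (h : IsBohrCompactification.{u, v, w} G' K β) {p : G →* G'} (hp : IsQuotientMap p)
    (hker : ∀ (L : Type w) [Group L] [TopologicalSpace L] [IsTopologicalGroup L]
      [CompactSpace L] [T2Space L] (α : G →* L), Continuous α → p.ker ≤ α.ker) :
    IsBohrCompactification.{u, v, w} G K (β.comp p) := by
  refine ⟨h.1.comp hp.continuous, h.2.1.comp hp.surjective.denseRange h.1,
    fun L _ _ _ _ _ α hα => ?_⟩
  let αt := p.liftOfSurjective hp.surjective ⟨α, hker L α hα⟩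
  have hαt : αt.comp p = α := p.liftOfRightInverse_comp _ _ _
  obtain ⟨γ, hγ, hfac⟩ := h.2.2 L αt (hp.continuous_iff.2 (by rwa [← MonoidHom.coe_comp, hαt]))
  exact ⟨γ, hγ, by rw [← hαt, hfac, MonoidHom.comp_assoc]⟩

end IsBohrCompactification

namespace IsProfiniteCompletion

variable {G : Type u} [Group G] [TopologicalSpace G] {K : Type v} [Group K] [TopologicalSpace K]
  [IsTopologicalGroup K] [CompactSpace K] [T2Space K]
  [TotallyDisconnectedSpace K]

theorem lift_universe [Countable G] {β : G →* K} (h : IsProfiniteCompletion.{u, v, w₁} G K β) :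
    IsProfiniteCompletion.{u, v, w₂} G K β :=
  ⟨h.1, h.2.1, fun _ _ _ _ _ _ _ α hα => α.exists_continuous_eq_comp_of_toShrinkRangeClosure
    (h.2.2 _ _ (MonoidHom.continuous_toShrinkRangeClosure hα))⟩

theorem comp_of_isQuotientMap {G' : Type u} [Group G'] [TopologicalSpace G'] {β : G' →* K}
    (h : IsProfiniteCompletion.{u, v, w} G' K β) {p : G →* G'} (hp : IsQuotientMap p)
    (hker : ∀ (L : Type w) [Group L] [TopologicalSpace L] [IsTopologicalGroup L]
      [CompactSpace L] [T2Space L] [TotallyDisconnectedSpace L] (α : G →* L),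
      Continuous α → p.ker ≤ α.ker) :
    IsProfiniteCompletion.{u, v, w} G K (β.comp p) := by
  refine ⟨h.1.comp hp.continuous, h.2.1.comp hp.surjective.denseRange h.1,
    fun L _ _ _ _ _ _ α hα => ?_⟩
  let αt := p.liftOfSurjective hp.surjective ⟨α, hker L α hα⟩
  have hαt : αt.comp p = α := p.liftOfRightInverse_comp _ _ _
  obtain ⟨γ, hγ, hfac⟩ := h.2.2 L αt (hp.continuous_iff.2 (by rwa [← MonoidHom.coe_comp, hαt]))
  exact ⟨γ, hγ, by rw [← hαt, hfac, MonoidHom.comp_assoc]⟩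

end IsProfiniteCompletion

theorem wreath_bohr_and_prof_of_abelianization
    (Λ : Type u) (H : Type u) [Group Λ] [Group H] [Countable Λ] [Countable H] [Infinite H]
    (K : Type v) [Group K] [TopologicalSpace K] [IsTopologicalGroup K] [CompactSpace K]
    [T2Space K] (β : Wreath (Abelianization Λ) H →* K)
    (K' : Type w) [Group K'] [TopologicalSpace K'] [IsTopologicalGroup K'] [CompactSpace K']
    [T2Space K'] [TotallyDisconnectedSpace K']
    (α : Wreath (Abelianization Λ) H →* K') :
    (IsBohrCompactification (Wreath (Abelianization Λ) H) K β →
      IsBohrCompactification (Wreath Λ H) K (β.comp (wreathMap H Abelianization.of))) ∧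
      (IsProfiniteCompletion (Wreath (Abelianization Λ) H) K' α →
        IsProfiniteCompletion (Wreath Λ H) K' (α.comp (wreathMap H Abelianization.of))) := by
  have hp : IsQuotientMap (wreathMap H (Abelianization.of (G := Λ))) :=
    isQuotientMap_iff_isClosed.2 ⟨wreathMap_surjective (QuotientGroup.mk'_surjective _),
      fun _ => by simp only [isClosed_discrete]⟩
  exact ⟨fun h => h.lift_universe.comp_of_isQuotientMap hp
      fun _ _ _ _ _ _ γ _ => ker_wreathMap_abelianization_le γ,
    fun h => h.lift_universe.comp_of_isQuotientMap hp
      fun _ _ _ _ _ _ _ γ _ => ker_wreathMap_abelianization_le γ⟩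
end

section
/- Let Λ be a countable infinite group and H a countable infinite group, and let N = ⊕_{h∈H} Λ with H acting by shifting indices. Then every irreducible finite-dimensional unitary representation σ : N → U(m) whose H-orbit (the set of unitary-equivalence classes of the representations σ^h(n) = σ(h⁻¹·n), h ∈ H, where h⁻¹·n denotes the shift action) is finite, is one-dimensional, i.e., m may be taken to be 1 (σ(N) ⊆ U(1)). The same holds for any countable group Λ. -/
universe u v w

/-!
Fix `a ∈ N`. Since the orbit is finite and `H` is infinite, the stabiliser
`{h | σ ∘ shift h ≃ σ}` is infinite, giving infinitely many unitary conjugates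
`V_h σ(a) V_h⁻¹ = σ(shift h a)`. For each `b`, the supports of `shift h a` and `b` are disjoint,
so the two commute, for all but finitely many `h`. A cluster point `W` of the `V_h` in the
compact group `U(m)` thus yields a conjugate `W σ(a) W⁻¹` commuting with all of `σ(N)`, which
is scalar by Schur's lemma. So `σ(N)` consists of scalars, and irreducibility forces `m = 1`.
-/

open Filter Matrix

theorem Matrix.isCompact_unitaryGroup (n 𝕜 : Type*) [Fintype n] [DecidableEq n] [RCLike 𝕜] :
    IsCompact (unitaryGroup n 𝕜 : Set (Matrix n n 𝕜)) := by
  refine (isCompact_univ_pi fun _ => isCompact_univ_pi fun _ =>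
    isCompact_closedBall (0 : 𝕜) 1).of_isClosed_subset (isClosed_unitary (R := Matrix n n 𝕜)) ?_
  intro U hU i _ j _
  simpa using entry_norm_bound_of_unitary hU i j

instance Matrix.compactSpace_unitaryGroup (n 𝕜 : Type*) [Fintype n] [DecidableEq n] [RCLike 𝕜] :
    CompactSpace (unitaryGroup n 𝕜) :=
  isCompact_iff_compactSpace.mp (isCompact_unitaryGroup n 𝕜)

theorem exists_conj_commute_of_eventually_commute {K ι : Type*} [Group K] [TopologicalSpace K]
    [IsTopologicalGroup K] [CompactSpace K] [T2Space K] {l : Filter ι} [l.NeBot]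
    (V : ι → K) (a : K) :
    ∃ w : K, ∀ b : K, (∀ᶠ i in l, Commute (V i * a * (V i)⁻¹) b) → Commute (w * a * w⁻¹) b := by
  obtain ⟨w, -, hw⟩ := isCompact_univ.exists_mapClusterPt (f := l) (u := V) (by simp)
  refine ⟨w, fun b hb => ?_⟩
  have hclosed : IsClosed {x : K | Commute (x * a * x⁻¹) b} :=
    isClosed_eq (by fun_prop) (by fun_prop)
  exact hclosed.mem_of_mapClusterPt hw hb

namespace UnitarilyEquiv

variable {G : Type*} [Group G] {m : ℕ} {σ τ ρ : G →* unitaryGroup (Fin m) ℂ}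

theorem symm (h : UnitarilyEquiv σ τ) : UnitarilyEquiv τ σ := by
  obtain ⟨V, hV⟩ := h
  exact ⟨V⁻¹, fun g => by simp [hV, mul_assoc]⟩

theorem trans (h₁ : UnitarilyEquiv σ τ) (h₂ : UnitarilyEquiv τ ρ) : UnitarilyEquiv σ ρ := by
  obtain ⟨V, hV⟩ := h₁
  obtain ⟨W, hW⟩ := h₂
  exact ⟨W * V, fun g => by simp [hV, hW, mul_assoc]⟩

theorem comp {G' : Type*} [Group G'] (h : UnitarilyEquiv σ τ) (f : G' →* G) :
    UnitarilyEquiv (σ.comp f) (τ.comp f) := by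
  obtain ⟨V, hV⟩ := h
  exact ⟨V, fun g => hV (f g)⟩

end UnitarilyEquiv

namespace IsIrreducibleRep

variable {G : Type*} [Group G] {m : ℕ} {σ : G →* unitaryGroup (Fin m) ℂ}

theorem exists_eq_smul_one_of_commute (hirr : IsIrreducibleRep σ) (hm : 1 ≤ m)
    (B : Matrix (Fin m) (Fin m) ℂ) (hB : ∀ g, Commute B (σ g : Matrix (Fin m) (Fin m) ℂ)) :
    ∃ c : ℂ, B = c • 1 := by
  have : Nonempty (Fin m) := ⟨⟨0, hm⟩⟩
  obtain ⟨c, hc⟩ := Module.End.exists_eigenvalue (mulVecLin B)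
  set E := Module.End.eigenspace (mulVecLin B) c
  have hE : ∀ g, ∀ v ∈ E, (σ g : Matrix (Fin m) (Fin m) ℂ) *ᵥ v ∈ E := by
    intro g v hv
    rw [Module.End.mem_eigenspace_iff, mulVecLin_apply] at hv ⊢
    rw [mulVec_mulVec, (hB g).eq, ← mulVec_mulVec, hv, mulVec_smul]
  have hEtop : E = ⊤ := (hirr E hE).resolve_left hc
  refine ⟨c, toLin'.injective (LinearMap.ext fun v => ?_)⟩
  have hv := Module.End.mem_eigenspace_iff.mp (hEtop ▸ Submodule.mem_top : v ∈ E)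
  simpa [toLin'_apply, smul_mulVec] using hv

theorem eq_one_of_forall_exists_eq_smul_one (hirr : IsIrreducibleRep σ) (hm : 1 ≤ m)
    (hscalar : ∀ g, ∃ c : ℂ, (σ g : Matrix (Fin m) (Fin m) ℂ) = c • 1) : m = 1 := by
  set e : Fin m → ℂ := Pi.single ⟨0, hm⟩ 1
  have he : e ≠ 0 := Pi.single_ne_zero_iff.mpr one_ne_zero
  have hline : ∀ g, ∀ v ∈ ℂ ∙ e, (σ g : Matrix (Fin m) (Fin m) ℂ) *ᵥ v ∈ ℂ ∙ e := by
    intro g v hv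
    obtain ⟨c, hc⟩ := hscalar g
    rw [hc, smul_mulVec, one_mulVec]
    exact Submodule.smul_mem _ c hv
  have htop : ℂ ∙ e = ⊤ :=
    (hirr _ hline).resolve_left (by simpa [Submodule.span_singleton_eq_bot] using he)
  have hrank := finrank_span_singleton (K := ℂ) he
  rwa [htop, finrank_top, Module.finrank_fin_fun] at hrank

end IsIrreducibleRep

section Action

variable {N H : Type*} [Group N] [Group H] {m : ℕ}

theorem infinite_setOf_unitarilyEquiv_comp_of_finite_orbit [Infinite H] (φ : H →* MulAut N)
    {σ : N →* unitaryGroup (Fin m) ℂ}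
    (horb : ∃ S : Finset (N →* unitaryGroup (Fin m) ℂ),
      ∀ h : H, ∃ τ ∈ S, UnitarilyEquiv (σ.comp (φ h⁻¹).toMonoidHom) τ) :
    {h : H | UnitarilyEquiv σ (σ.comp (φ h).toMonoidHom)}.Infinite := by
  obtain ⟨S, hS⟩ := horb
  choose τ hτS hτ using hS
  obtain ⟨τ₀, hfiber⟩ := Finite.exists_infinite_fiber fun h => (⟨τ h, hτS h⟩ : S)
  have hfiber := Set.infinite_coe_iff.mp hfiber
  obtain ⟨t₀, ht₀⟩ := hfiber.nonempty
  have hcomp : ∀ a b : H,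
      (σ.comp (φ a).toMonoidHom).comp (φ b).toMonoidHom = σ.comp (φ (a * b)).toMonoidHom :=
    fun a b => MonoidHom.ext fun n => by simp
  have hone : σ.comp (φ 1).toMonoidHom = σ := MonoidHom.ext fun n => by simp
  refine (hfiber.image (mul_right_injective t₀⁻¹).injOn).mono ?_
  rintro _ ⟨t, ht, rfl⟩
  have hτt : τ t = τ t₀ := congrArg Subtype.val (ht.trans ht₀.symm)
  have hequiv := ((hτ t₀).trans (hτt ▸ (hτ t).symm)).comp (φ t).toMonoidHom
  rw [hcomp, hcomp, inv_mul_cancel, hone] at hequiv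
  exact hequiv.symm

theorem exists_eq_smul_one_of_infinite_of_finite_not_commute (φ : H →* MulAut N)
    {σ : N →* unitaryGroup (Fin m) ℂ} (hirr : IsIrreducibleRep σ) (hm : 1 ≤ m)
    (hstab : {h : H | UnitarilyEquiv σ (σ.comp (φ h).toMonoidHom)}.Infinite)
    (hcomm : ∀ a b : N, {h : H | ¬Commute (φ h a) b}.Finite) (a : N) :
    ∃ c : ℂ, (σ a : Matrix (Fin m) (Fin m) ℂ) = c • 1 := by
  have : Infinite _ := hstab.to_subtype
  choose V hV using fun h : {h : H | UnitarilyEquiv σ (σ.comp (φ h).toMonoidHom)} => h.2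
  obtain ⟨W, hW⟩ := exists_conj_commute_of_eventually_commute (l := cofinite) V (σ a)
  have hWcomm : ∀ b, Commute ((W * σ a * W⁻¹ : unitaryGroup (Fin m) ℂ) : Matrix (Fin m) (Fin m) ℂ)
      (σ b : Matrix (Fin m) (Fin m) ℂ) := by
    intro b
    refine (hW (σ b) ?_).map (unitaryGroup (Fin m) ℂ).subtype
    refine eventually_cofinite.mpr (((hcomm a b).preimage Subtype.val_injective.injOn).subset ?_)
    intro h hh hab
    exact hh (hV h a ▸ hab.map σ)
  obtain ⟨c, hc⟩ := hirr.exists_eq_smul_one_of_commute hm _ hWcomm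
  refine ⟨c, ?_⟩
  calc (σ a : Matrix (Fin m) (Fin m) ℂ)
      = ((W⁻¹ * (W * σ a * W⁻¹) * W : unitaryGroup (Fin m) ℂ) : Matrix (Fin m) (Fin m) ℂ) := by
        group
    _ = c • 1 := by
        rw [Submonoid.coe_mul, Submonoid.coe_mul, hc, mul_smul_comm, mul_one, smul_mul_assoc,
          ← Submonoid.coe_mul, inv_mul_cancel, OneMemClass.coe_one]

end Action

theorem finite_setOf_not_commute_shiftAut {Λ H : Type*} [Group Λ] [Group H]
    (a b : restrictedProduct H Λ) : {h : H | ¬Commute (shiftAut Λ H h a) b}.Finite := by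
  refine (Set.Finite.image2 (fun x y => x * y⁻¹) b.2 a.2).subset fun h hh => ?_
  by_contra hsupp
  refine hh <| Subtype.ext (funext fun x => ?_)
  show (a : H → Λ) (h⁻¹ * x) * (b : H → Λ) x = (b : H → Λ) x * (a : H → Λ) (h⁻¹ * x)
  by_cases hb : (b : H → Λ) x = 1
  · simp [hb]
  by_cases ha : (a : H → Λ) (h⁻¹ * x) = 1
  · simp [ha]
  exact (hsupp ⟨x, hb, h⁻¹ * x, ha, by group⟩).elim

theorem finite_orbit_rep_of_wreath_base_is_one_dimensional_general
    (Λ : Type u) (H : Type v) [Group Λ] [Group H]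
    [Infinite H]
    {m : ℕ} (hm : 1 ≤ m)
    (σ : restrictedProduct H Λ →* Matrix.unitaryGroup (Fin m) ℂ)
    (hirr : IsIrreducibleRep σ)
    (horb : ∃ S : Finset (restrictedProduct H Λ →* Matrix.unitaryGroup (Fin m) ℂ),
      ∀ h : H, ∃ τ ∈ S,
        UnitarilyEquiv (σ.comp ((shiftAut Λ H) h⁻¹).toMonoidHom) τ) :
    m = 1 :=
  hirr.eq_one_of_forall_exists_eq_smul_one hm <|
    exists_eq_smul_one_of_infinite_of_finite_not_commute (shiftAut Λ H) hirr hm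
      (infinite_setOf_unitarilyEquiv_comp_of_finite_orbit (shiftAut Λ H) horb)
      finite_setOf_not_commute_shiftAut

theorem finite_orbit_rep_of_wreath_base_is_one_dimensional
    (Λ : Type u) (H : Type v) [Group Λ] [Group H]
    [Countable Λ] [Countable H] [Infinite H]
    {m : ℕ} (hm : 1 ≤ m)
    (σ : restrictedProduct H Λ →* Matrix.unitaryGroup (Fin m) ℂ)
    (hirr : IsIrreducibleRep σ)
    (horb : ∃ S : Finset (restrictedProduct H Λ →* Matrix.unitaryGroup (Fin m) ℂ),
      ∀ h : H, ∃ τ ∈ S,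
        UnitarilyEquiv (σ.comp ((shiftAut Λ H) h⁻¹).toMonoidHom) τ) :
    m = 1 :=
  finite_orbit_rep_of_wreath_base_is_one_dimensional_general Λ H hm σ hirr horb
end
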